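/- arXiv:1211.3553 — 3 statements merged into one kernel-verified Lean document; each statement's English description precedes it below -/
import Mathlib

section
/- Key equivalence of the two-round cipher under flipping the most significant bit of the keystream: for 8-bit values p, t', c', k, the composed encryption output p XOR (t' ∔ k) XOR (c' ∔ k) is unchanged when k is replaced by k XOR 128: p XOR (t' ∔ (k XOR 128)) XOR (c' ∔ (k XOR 128)) = p XOR (t' ∔ k) XOR (c' ∔ k). -/
/-!
Flipping bit `n` changes a number by `± 2^n`, i.e. by `2^n` modulo `2^(n+1)`; so replacing `k` by
`k ^^^ 2^n` flips bit `n` of every sum `x + k` reduced modulo `2^(n+1)`. In the cipher the two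
flipped bits (`n = 7`) cancel in the XOR.
-/

namespace Nat

theorem xor_two_pow_modEq_add (a n : ℕ) : a ^^^ 2 ^ n ≡ a + 2 ^ n [MOD 2 ^ (n + 1)] := by
  apply Nat.eq_of_testBit_eq
  intro i
  rw [testBit_mod_two_pow, testBit_mod_two_pow, testBit_xor, testBit_two_pow, Nat.add_comm a]
  rcases lt_trichotomy i n with hi | rfl | hi
  · simp [hi.ne', testBit_two_pow_add_gt hi, show i < n + 1 by omega]
  · simp [testBit_two_pow_add_eq]
  · simp [show ¬ i < n + 1 by omega]

theorem add_xor_two_pow_mod_two_pow_succ (x k n : ℕ) :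
    (x + (k ^^^ 2 ^ n)) % 2 ^ (n + 1) = ((x + k) % 2 ^ (n + 1)) ^^^ 2 ^ n := by
  have hlt : ((x + k) % 2 ^ (n + 1)) ^^^ 2 ^ n < 2 ^ (n + 1) :=
    xor_lt_two_pow (mod_lt _ (by positivity)) (pow_lt_pow_right₀ one_lt_two n.lt_succ_self)
  rw [← mod_eq_of_lt hlt]
  calc x + (k ^^^ 2 ^ n) ≡ x + k + 2 ^ n [MOD 2 ^ (n + 1)] := by
        rw [Nat.add_assoc]; exact (xor_two_pow_modEq_add k n).add_left x
    _ ≡ (x + k) % 2 ^ (n + 1) + 2 ^ n [MOD 2 ^ (n + 1)] := (mod_modEq _ _).symm.add_right _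
    _ ≡ ((x + k) % 2 ^ (n + 1)) ^^^ 2 ^ n [MOD 2 ^ (n + 1)] := (xor_two_pow_modEq_add _ n).symm

theorem xor_xor_xor_xor_self (p a b m : ℕ) : p ^^^ (a ^^^ m) ^^^ (b ^^^ m) = p ^^^ a ^^^ b := by
  simp only [Nat.xor_assoc, Nat.xor_left_comm m, Nat.xor_self, Nat.xor_zero]

end Nat

theorem key_flip_msb_equiv_general (p t' c' k : ℕ) :
    p ^^^ ((t' + (k ^^^ 128)) % 256) ^^^ ((c' + (k ^^^ 128)) % 256)
      = p ^^^ ((t' + k) % 256) ^^^ ((c' + k) % 256) := by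
  have flip (x : ℕ) : (x + (k ^^^ 128)) % 256 = ((x + k) % 256) ^^^ 128 :=
    Nat.add_xor_two_pow_mod_two_pow_succ x k 7
  rw [flip, flip, Nat.xor_xor_xor_xor_self]

theorem key_flip_msb_equiv (p t' c' k : ℕ)
    (hp : p < 256) (ht' : t' < 256) (hc' : c' < 256) (hk : k < 256) :
    p ^^^ ((t' + (k ^^^ 128)) % 256) ^^^ ((c' + (k ^^^ 128)) % 256)
      = p ^^^ ((t' + k) % 256) ^^^ ((c' + k) % 256) :=
  key_flip_msb_equiv_general p t' c' k
end

section
/- Consequently, for a keystream K = (k(1), ..., k(L)) of 8-bit values, any keystream K' with k'(i) ∈ {k(i), k(i) XOR 128} for each i produces the same ciphertext under the composed encryption map c(i) = p(i) XOR (t(i-1) ∔ k(i)) XOR (c(i-1) ∔ k(i)); in particular there are at least 2^L keystreams equivalent to K (if the L ≥ 1 values are all below 128 these 2^L keystreams are pairwise distinct). -/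
/-!
Modulo `2 ^ (n + 1)`, adding `2 ^ n` only toggles the top bit `n`, exactly as XOR with `2 ^ n` does.
So flipping the top bit of the key flips the top bit of both masks `t ∔ k` and `c ∔ k`, and the
two flips cancel in `p ⊕ (t ∔ k) ⊕ (c ∔ k)`. Distinct flip sets give distinct keystreams because
`x ⊕ 2 ^ n ≠ x` for every `x`.
-/

open Function

/-- The map `E(p, t, c, k)` on `(n + 1)`-bit words; bytes are the case `n = 7`. -/
def composedEncrypt (n p t c k : ℕ) : ℕ :=
  p ^^^ (t + k) % 2 ^ (n + 1) ^^^ (c + k) % 2 ^ (n + 1)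

theorem Nat.add_two_pow_modEq_xor_two_pow (a n : ℕ) :
    a + 2 ^ n ≡ a ^^^ 2 ^ n [MOD 2 ^ (n + 1)] := by
  refine Nat.eq_of_testBit_eq fun i => ?_
  rw [add_comm]
  simp only [Nat.testBit_mod_two_pow, Nat.testBit_xor, Nat.testBit_two_pow]
  rcases lt_trichotomy i n with h | rfl | h
  · simp [Nat.testBit_two_pow_add_gt h, h.ne', h.trans (Nat.lt_succ_self n)]
  · simp [Nat.testBit_two_pow_add_eq]
  · simp [show ¬ i < n + 1 by omega]

theorem Nat.add_xor_two_pow_mod (t x n : ℕ) :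
    (t + (x ^^^ 2 ^ n)) % 2 ^ (n + 1) = (t + x) % 2 ^ (n + 1) ^^^ 2 ^ n := by
  have h : t + (x ^^^ 2 ^ n) ≡ (t + x) ^^^ 2 ^ n [MOD 2 ^ (n + 1)] :=
    calc t + (x ^^^ 2 ^ n) ≡ t + (x + 2 ^ n) [MOD 2 ^ (n + 1)] :=
          (Nat.add_two_pow_modEq_xor_two_pow x n).symm.add_left t
      _ = (t + x) + 2 ^ n := (add_assoc _ _ _).symm
      _ ≡ (t + x) ^^^ 2 ^ n [MOD 2 ^ (n + 1)] := Nat.add_two_pow_modEq_xor_two_pow _ _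
  rw [h, Nat.xor_mod_two_pow, Nat.mod_eq_of_lt (Nat.pow_lt_pow_succ one_lt_two)]

theorem Nat.xor_xor_xor_cancel_right (a b c : ℕ) : (a ^^^ c) ^^^ (b ^^^ c) = a ^^^ b := by
  rw [Nat.xor_comm b, ← Nat.xor_assoc, Nat.xor_assoc a, Nat.xor_self, Nat.xor_zero]

theorem composedEncrypt_xor_two_pow (n p t c k : ℕ) :
    composedEncrypt n p t c (k ^^^ 2 ^ n) = composedEncrypt n p t c k := by
  rw [composedEncrypt, composedEncrypt, Nat.add_xor_two_pow_mod, Nat.add_xor_two_pow_mod,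
    Nat.xor_assoc, Nat.xor_xor_xor_cancel_right, ← Nat.xor_assoc]

theorem Nat.xor_two_pow_ne_self (x n : ℕ) : x ^^^ 2 ^ n ≠ x := fun h => by
  simpa using congrArg (Nat.testBit · n) h

theorem Finset.piecewise_injective_of_forall_ne {ι α : Type*} [DecidableEq ι] {f g : ι → α}
    (h : ∀ i, f i ≠ g i) : Injective fun S : Finset ι => S.piecewise f g := by
  intro S T hST
  ext i
  have hi := congrFun hST i
  by_cases hS : i ∈ S <;> by_cases hT : i ∈ T <;> simp_all [eq_comm]

theorem equivalent_keystreams_general (L : ℕ) (k : Fin L → ℕ) :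
    (∀ p t' c' x : ℕ, p < 256 → t' < 256 → c' < 256 → x < 256 →
      p ^^^ ((t' + (x ^^^ 128)) % 256) ^^^ ((c' + (x ^^^ 128)) % 256)
        = p ^^^ ((t' + x) % 256) ^^^ ((c' + x) % 256)) ∧
    Function.Injective
      (fun S : Finset (Fin L) => fun i => if i ∈ S then k i ^^^ 128 else k i) :=
  ⟨fun p t' c' x _ _ _ _ => composedEncrypt_xor_two_pow 7 p t' c' x,
    Finset.piecewise_injective_of_forall_ne fun i => Nat.xor_two_pow_ne_self (k i) 7⟩

theorem equivalent_keystreams (L : ℕ) (hL : 1 ≤ L) (k : Fin L → ℕ)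
    (hk : ∀ i, k i < 128) :
    (∀ p t' c' x : ℕ, p < 256 → t' < 256 → c' < 256 → x < 256 →
      p ^^^ ((t' + (x ^^^ 128)) % 256) ^^^ ((c' + (x ^^^ 128)) % 256)
        = p ^^^ ((t' + x) % 256) ^^^ ((c' + x) % 256)) ∧
    Function.Injective
      (fun S : Finset (Fin L) => fun i => if i ∈ S then k i ^^^ 128 else k i) :=
  equivalent_keystreams_general L k
end

section
/- Invertibility of the full two-round encryption: for L ≥ 2, given keystream k : Fin L → Fin 256 and constant c0, the map sending plaintext P = (p(1), ..., p(L)) to ciphertext C defined by t(1) = p(1) XOR k(1) XOR (c0 ∔ k(1)), t(i) = p(i) XOR k(i-1) XOR (t(i-1) ∔ k(i)) for 2 ≤ i ≤ L, c(1) = t(1) XOR k(1) XOR (t(L) ∔ k(1)), c(i) = t(i) XOR k(i-1) XOR (c(i-1) ∔ k(i)) for 2 ≤ i ≤ L, is injective on (Fin 256)^L. -/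
/-!
Each round maps its input `y` to its output `x` by `x i = y i ⊕ k (i-1) ⊕ (x (i-1) ∔ k i)`,
and XOR with a fixed byte is an involution, so `y i` is recovered from `x i` and `x (i-1)`.
Equal ciphertexts therefore give equal intermediate texts at positions `2, …, L`; as `L ≥ 2`
this includes `t L`, the value fed into position `1` of the second round, which then gives
`t 1` as well. Undoing the first round in the same way yields equal plaintexts.
-/

namespace Fin

variable {n N : ℕ}

theorem xor_xor_cancel_right (hN : N = 2 ^ n) (a b : Fin N) : a ^^^ b ^^^ b = a := by
  subst hN
  rw [xor_assoc rfl, xor_self, xor_zero]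

theorem eq_of_xor_xor_eq (hN : N = 2 ^ n) {a a' b c : Fin N}
    (h : a ^^^ b ^^^ c = a' ^^^ b ^^^ c) : a = a' := by
  rw [← xor_xor_cancel_right hN a b, ← xor_xor_cancel_right hN a' b,
    ← xor_xor_cancel_right hN (a ^^^ b) c, h, xor_xor_cancel_right hN]

end Fin

section Round

variable {n N L : ℕ} {k : ℕ → Fin N} {x₀ x₀' : Fin N} {y y' x x' : ℕ → Fin N}

/-- `x₀` plays the role of `x 0`: it is `c0` in the first round and `t L` in the second. -/
def IsRound (L : ℕ) (k : ℕ → Fin N) (x₀ : Fin N) (y x : ℕ → Fin N) : Prop :=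
  x 1 = y 1 ^^^ k 1 ^^^ (x₀ + k 1) ∧
    ∀ i, 2 ≤ i → i ≤ L → x i = y i ^^^ k (i - 1) ^^^ (x (i - 1) + k i)

theorem IsRound.input_eq_of_output_eq_of_two_le (hN : N = 2 ^ n) (h : IsRound L k x₀ y x)
    (h' : IsRound L k x₀' y' x') (hx : ∀ i, 1 ≤ i → i ≤ L → x i = x' i) :
    ∀ i, 2 ≤ i → i ≤ L → y i = y' i := by
  intro i h2 hiL
  refine Fin.eq_of_xor_xor_eq hN (b := k (i - 1)) (c := x (i - 1) + k i) ?_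
  rw [← h.2 i h2 hiL, hx (i - 1) (by omega) (by omega), ← h'.2 i h2 hiL]
  exact hx i (by omega) hiL

theorem IsRound.input_eq_of_output_eq (hN : N = 2 ^ n) (h : IsRound L k x₀ y x)
    (h' : IsRound L k x₀' y' x') (hx₀ : x₀ = x₀') (hx : ∀ i, 1 ≤ i → i ≤ L → x i = x' i) :
    ∀ i, 1 ≤ i → i ≤ L → y i = y' i := by
  intro i h1 hiL
  obtain rfl | h2 : i = 1 ∨ 2 ≤ i := by omega
  · refine Fin.eq_of_xor_xor_eq hN (b := k 1) (c := x₀ + k 1) ?_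
    rw [← h.1, hx₀, ← h'.1]
    exact hx 1 le_rfl hiL
  · exact h.input_eq_of_output_eq_of_two_le hN h' hx i h2 hiL

end Round

theorem two_round_encryption_injective (L : ℕ) (hL : 2 ≤ L)
    (k : ℕ → Fin 256) (c0 : Fin 256)
    (p₁ p₂ t₁ t₂ c₁ c₂ : ℕ → Fin 256)
    (ht₁1 : t₁ 1 = p₁ 1 ^^^ k 1 ^^^ (c0 + k 1))
    (ht₁ : ∀ i, 2 ≤ i → i ≤ L → t₁ i = p₁ i ^^^ k (i - 1) ^^^ (t₁ (i - 1) + k i))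
    (hc₁1 : c₁ 1 = t₁ 1 ^^^ k 1 ^^^ (t₁ L + k 1))
    (hc₁ : ∀ i, 2 ≤ i → i ≤ L → c₁ i = t₁ i ^^^ k (i - 1) ^^^ (c₁ (i - 1) + k i))
    (ht₂1 : t₂ 1 = p₂ 1 ^^^ k 1 ^^^ (c0 + k 1))
    (ht₂ : ∀ i, 2 ≤ i → i ≤ L → t₂ i = p₂ i ^^^ k (i - 1) ^^^ (t₂ (i - 1) + k i))
    (hc₂1 : c₂ 1 = t₂ 1 ^^^ k 1 ^^^ (t₂ L + k 1))
    (hc₂ : ∀ i, 2 ≤ i → i ≤ L → c₂ i = t₂ i ^^^ k (i - 1) ^^^ (c₂ (i - 1) + k i))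
    (hcc : ∀ i, 1 ≤ i → i ≤ L → c₁ i = c₂ i) :
    ∀ i, 1 ≤ i → i ≤ L → p₁ i = p₂ i := by
  have hN : (256 : ℕ) = 2 ^ 8 := rfl
  have first₁ : IsRound L k c0 p₁ t₁ := ⟨ht₁1, ht₁⟩
  have first₂ : IsRound L k c0 p₂ t₂ := ⟨ht₂1, ht₂⟩
  have second₁ : IsRound L k (t₁ L) t₁ c₁ := ⟨hc₁1, hc₁⟩
  have second₂ : IsRound L k (t₂ L) t₂ c₂ := ⟨hc₂1, hc₂⟩
  have htL : t₁ L = t₂ L := second₁.input_eq_of_output_eq_of_two_le hN second₂ hcc L hL le_rfl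
  have ht := second₁.input_eq_of_output_eq hN second₂ htL hcc
  exact first₁.input_eq_of_output_eq hN first₂ rfl ht
end
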